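/- The tree edit distance between forests F and G equals half the minimum cost over all tree alignments of their parenthesis representations: 2·ted(F,G) = min over tree alignments A of the alignment cost of A between str(F) and str(G). -/

import Mathlib

/-- Rooted ordered labeled trees. -/
inductive LTree (α : Type) : Type where
  | node : α → List (LTree α) → LTree α

mutual
  /-- Number of nodes of a labeled tree. -/
  def tsize {α : Type} : LTree α → ℕ
    | .node _ ts => 1 + fsize ts
  /-- Number of nodes of a labeled forest. -/
  def fsize {α : Type} : List (LTree α) → ℕ
    | [] => 0
    | t :: ts => tsize t + fsize ts
end

mutual
  /-- Parenthesis representation of a tree: `(_a · str(children) · )_a`. -/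
  def pstr {α : Type} : LTree α → List (Bool × α)
    | .node a ts => (true, a) :: (pforest ts ++ [(false, a)])
  /-- Parenthesis representation of a forest. -/
  def pforest {α : Type} : List (LTree α) → List (Bool × α)
    | [] => []
    | t :: ts => pstr t ++ pforest ts
end

mutual
  /-- The pair `(o(u), c(u))` of positions, in the parenthesis representation,
  of the node `u` of a tree addressed by a list of child indices. -/
  def tpos {α : Type} : LTree α → List ℕ → Option (ℕ × ℕ)
    | t, [] => some (0, (pstr t).length - 1)
    | .node _ ts, k :: addr => (fpos ts (k :: addr)).map (fun p => (p.1 + 1, p.2 + 1))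
  /-- The pair `(o(u), c(u))` of positions of the node of a forest addressed by a
  nonempty list of child indices (the first index selects the tree). -/
  def fpos {α : Type} : List (LTree α) → List ℕ → Option (ℕ × ℕ)
    | [], _ => none
    | _ :: _, [] => none
    | t :: _, 0 :: addr => tpos t addr
    | t :: ts, (k + 1) :: addr =>
        (fpos ts (k :: addr)).map (fun p => (p.1 + (pstr t).length, p.2 + (pstr t).length))
end

mutual
  /-- The subtree of a tree at a given address. -/
  def tSub {α : Type} : LTree α → List ℕ → Option (LTree α)
    | t, [] => some t
    | .node _ ts, k :: addr => fSub ts (k :: addr)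
  /-- The subtree of a forest at a given (nonempty) address. -/
  def fSub {α : Type} : List (LTree α) → List ℕ → Option (LTree α)
    | [], _ => none
    | _ :: _, [] => none
    | t :: _, 0 :: addr => tSub t addr
    | _ :: ts, (k + 1) :: addr => fSub ts (k :: addr)
end

/-- One node edit on a forest: relabel a node, delete a node (splicing its children
into its place), or insert a node (gathering a contiguous run of siblings as its
children); edits may occur at any depth. -/
inductive FStep {α : Type} : List (LTree α) → List (LTree α) → Prop where
  | relabel (pre post ts : List (LTree α)) (a b : α) :
      FStep (pre ++ LTree.node a ts :: post) (pre ++ LTree.node b ts :: post)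
  | delete (pre post ts : List (LTree α)) (a : α) :
      FStep (pre ++ LTree.node a ts :: post) (pre ++ ts ++ post)
  | insert (pre mid post : List (LTree α)) (a : α) :
      FStep (pre ++ mid ++ post) (pre ++ LTree.node a mid :: post)
  | congr (pre post ts ts' : List (LTree α)) (a : α) :
      FStep ts ts' → FStep (pre ++ LTree.node a ts :: post) (pre ++ LTree.node a ts' :: post)

/-- `FEdits n F G` : `G` can be obtained from `F` by `n` node edits. -/
inductive FEdits {α : Type} : ℕ → List (LTree α) → List (LTree α) → Prop where
  | refl (F : List (LTree α)) : FEdits 0 F F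
  | step {n : ℕ} {F G H : List (LTree α)} :
      FStep F G → FEdits n G H → FEdits (n + 1) F H

/-- Tree edit distance: minimum number of node insertions, deletions, and label
substitutions transforming forest `F` into forest `G`. -/
noncomputable def ted {α : Type} (F G : List (LTree α)) : ℕ :=
  sInf {n | FEdits n F G}

/-- A monotone matching: a list of index pairs strictly increasing in both
coordinates. -/
def IsMatching (M : List (ℕ × ℕ)) : Prop :=
  M.Chain' (fun p q => p.1 < q.1 ∧ p.2 < q.2)

/-- All pairs of the matching are within the bounds of the two strings. -/
def InBounds {β : Type} (s t : List β) (M : List (ℕ × ℕ)) : Prop :=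
  ∀ p ∈ M, p.1 < s.length ∧ p.2 < t.length

/-- The cost of the alignment represented by the monotone matching `M` of `s` and
`t` : deletions in `s`, plus deletions in `t`, plus substitutions (aligned pairs of
distinct characters). -/
def alignCost {β : Type} [DecidableEq β] (s t : List β) (d : β) (M : List (ℕ × ℕ)) : ℕ :=
  (s.length - M.length) + (t.length - M.length) +
    M.countP (fun p => decide (s.getD p.1 d ≠ t.getD p.2 d))

/-- A tree alignment of forests `F` and `G` : an alignment (monotone matching) of
their parenthesis representations such that, for each node `u` of `F`, either both
parentheses of `u` are deleted, or there is a node `v` of `G` whose opening and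
closing parentheses are aligned with those of `u`. -/
def TreeAligned {α : Type} (F G : List (LTree α)) (M : List (ℕ × ℕ)) : Prop :=
  IsMatching M ∧ InBounds (pforest F) (pforest G) M ∧
    ∀ a ou cu, fpos F a = some (ou, cu) →
      ((∀ q ∈ M, q.1 ≠ ou ∧ q.1 ≠ cu) ∨
        ∃ b ov cv, fpos G b = some (ov, cv) ∧ (ou, ov) ∈ M ∧ (cu, cv) ∈ M)

/-!
Each edit step is realised by a tree alignment of cost at most two: a relabelling mismatches the
two parentheses of one node, a deletion or an insertion leaves them unaligned. Tree alignments
compose with subadditive cost, so some tree alignment costs at most `2·ted(F, G)`.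

Conversely, take a tree alignment of `F = a(ts) F'` with `G = b(ss) G'`. If it touches no
parenthesis of the root `a`, removing that node from `F` leaves a tree alignment that costs two
less; symmetrically for `b`. Otherwise `a` is aligned with a node of `G`, and a pair reaching a
parenthesis of `b` forces that node to be `b`. The alignment then splits into alignments of
`ts` with `ss` and of `F'` with `G'`, plus the two root pairs, which cost `2·[a ≠ b]`. Induction
on `|str F| + |str G|` gives `2·ted(F, G) ≤ cost`.
-/

open List

section Matching

variable {M M₁ M₂ : List (ℕ × ℕ)}

theorem isMatching_iff_pairwise :
    IsMatching M ↔ M.Pairwise fun p q => p.1 < q.1 ∧ p.2 < q.2 :=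
  @isChain_iff_pairwise _ _ M ⟨fun h₁ h₂ => ⟨h₁.1.trans h₂.1, h₁.2.trans h₂.2⟩⟩

theorem IsMatching.trichotomous (h : IsMatching M) {p q : ℕ × ℕ} (hp : p ∈ M) (hq : q ∈ M) :
    (p.1 < q.1 ∧ p.2 < q.2) ∨ p = q ∨ (q.1 < p.1 ∧ q.2 < p.2) := by
  rw [isMatching_iff_pairwise] at h
  induction h with
  | nil => simp at hp
  | @cons x l hx _ ih =>
    rcases mem_cons.mp hp with rfl | hpl <;> rcases mem_cons.mp hq with rfl | hql
    exacts [Or.inr (Or.inl rfl), Or.inl (hx _ hql), Or.inr (Or.inr (hx _ hpl)), ih hpl hql]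

theorem IsMatching.eq_of_fst_eq (h : IsMatching M) {p q : ℕ × ℕ} (hp : p ∈ M) (hq : q ∈ M)
    (he : p.1 = q.1) : p = q := by
  rcases h.trichotomous hp hq with h | h | h <;> first | exact h | omega

theorem IsMatching.snd_lt_snd (h : IsMatching M) {p q : ℕ × ℕ} (hp : p ∈ M) (hq : q ∈ M)
    (hlt : p.1 < q.1) : p.2 < q.2 := by
  rcases h.trichotomous hp hq with h | rfl | h <;> omega

theorem IsMatching.map_iff {f g : ℕ → ℕ} (hf : StrictMono f) (hg : StrictMono g) :
    IsMatching (M.map (Prod.map f g)) ↔ IsMatching M := by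
  simp only [isMatching_iff_pairwise, pairwise_map, Prod.map_fst, Prod.map_snd, hf.lt_iff_lt,
    hg.lt_iff_lt]

theorem IsMatching.eq_append_cons_of_mem (h : IsMatching M) {p : ℕ × ℕ} (hp : p ∈ M) :
    ∃ A B, M = A ++ p :: B ∧ (∀ q ∈ A, q.1 < p.1 ∧ q.2 < p.2) ∧
      (∀ q ∈ B, p.1 < q.1 ∧ p.2 < q.2) ∧ IsMatching A ∧ IsMatching B := by
  obtain ⟨A, B, rfl⟩ := append_of_mem hp
  rw [isMatching_iff_pairwise, pairwise_append, pairwise_cons] at h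
  exact ⟨A, B, rfl, fun q hq => h.2.2 q hq p mem_cons_self, h.2.1.1,
    isMatching_iff_pairwise.mpr h.1, isMatching_iff_pairwise.mpr h.2.1.2⟩

theorem IsMatching.length_le_of_fst_lt (h : IsMatching M) {n : ℕ} (hb : ∀ p ∈ M, p.1 < n) :
    M.length ≤ n := by
  have hnd : (M.map Prod.fst).Nodup :=
    pairwise_map.mpr ((isMatching_iff_pairwise.mp h).imp fun hpq => hpq.1.ne)
  simpa using (hnd.subperm fun i hi => by
    obtain ⟨p, hp, rfl⟩ := mem_map.mp hi
    exact mem_range.mpr (hb p hp)).length_le.trans_eq length_range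

theorem IsMatching.length_le_of_snd_lt (h : IsMatching M) {n : ℕ} (hb : ∀ p ∈ M, p.2 < n) :
    M.length ≤ n := by
  have hs : IsMatching (M.map Prod.swap) := by
    rw [isMatching_iff_pairwise, pairwise_map]
    exact (isMatching_iff_pairwise.mp h).imp fun hpq => ⟨hpq.2, hpq.1⟩
  simpa using hs.length_le_of_fst_lt fun p hp => by
    obtain ⟨q, hq, rfl⟩ := mem_map.mp hp
    exact hb q hq

theorem exists_map_add_eq {m n : ℕ} {A : List (ℕ × ℕ)} (h : ∀ q ∈ A, m ≤ q.1 ∧ n ≤ q.2) :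
    ∃ A' : List (ℕ × ℕ), A'.map (Prod.map (· + m) (· + n)) = A := by
  change A ∈ Set.range (map _)
  rw [Set.range_list_map]
  intro q hq
  have := h q hq
  exact ⟨(q.1 - m, q.2 - n), by ext <;> simp <;> omega⟩

def shiftAppend (m n : ℕ) (M₁ M₂ : List (ℕ × ℕ)) : List (ℕ × ℕ) :=
  M₁ ++ M₂.map (Prod.map (· + m) (· + n))

theorem isMatching_shiftAppend_iff {m n : ℕ} {M₁ M₂ : List (ℕ × ℕ)}
    (hb : ∀ p ∈ M₁, p.1 < m ∧ p.2 < n) :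
    IsMatching (shiftAppend m n M₁ M₂) ↔ IsMatching M₁ ∧ IsMatching M₂ := by
  rw [shiftAppend, isMatching_iff_pairwise, pairwise_append, ← isMatching_iff_pairwise,
    ← isMatching_iff_pairwise, IsMatching.map_iff add_left_strictMono add_left_strictMono]
  refine ⟨fun h => ⟨h.1, h.2.1⟩, fun h => ⟨h.1, h.2, fun p hp q hq => ?_⟩⟩
  obtain ⟨r, -, rfl⟩ := mem_map.mp hq
  have := hb p hp
  simp only [Prod.map_fst, Prod.map_snd]
  omega

end Matching

section StringAlignment

variable {β : Type} {s t s₁ s₂ t₁ t₂ : List β} {d : β} {M M₁ M₂ : List (ℕ × ℕ)}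

theorem inBounds_shiftAppend_iff (hb : InBounds s₁ t₁ M₁) :
    InBounds (s₁ ++ s₂) (t₁ ++ t₂) (shiftAppend s₁.length t₁.length M₁ M₂) ↔
      InBounds s₂ t₂ M₂ := by
  simp only [InBounds, shiftAppend, mem_append, mem_map, length_append]
  constructor
  · intro h p hp
    have := h _ (Or.inr ⟨p, hp, rfl⟩)
    simp only [Prod.map_fst, Prod.map_snd] at this
    omega
  · rintro h p (hp | ⟨q, hq, rfl⟩)
    · have := hb p hp
      omega
    · have := h q hq
      simp only [Prod.map_fst, Prod.map_snd]
      omega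

theorem getD_append_add (s₁ s₂ : List β) (i : ℕ) :
    (s₁ ++ s₂).getD (i + s₁.length) d = s₂.getD i d := by
  rw [getD_append_right _ _ _ _ (by omega), Nat.add_sub_cancel]

/-- The position in `x :: (s₁ ++ y :: s₂)` of the `i`-th character of `s₁ ++ s₂`,
where `k = s₁.length`. -/
def skipRoot (k i : ℕ) : ℕ := if i < k then i + 1 else i + 2

theorem skipRoot_strictMono (k : ℕ) : StrictMono (skipRoot k) := by
  intro i j h
  unfold skipRoot
  split_ifs <;> omega

theorem skipRoot_ne_zero (k i : ℕ) : skipRoot k i ≠ 0 := by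
  unfold skipRoot; split_ifs <;> omega

theorem skipRoot_ne (k i : ℕ) : skipRoot k i ≠ k + 1 := by
  unfold skipRoot; split_ifs <;> omega

theorem exists_skipRoot_eq {k i : ℕ} (h₀ : i ≠ 0) (hk : i ≠ k + 1) : ∃ j, skipRoot k j = i :=
  ⟨if i ≤ k then i - 1 else i - 2, by unfold skipRoot; split_ifs <;> omega⟩

theorem getD_skipRoot (x y : β) (s₁ s₂ : List β) (i : ℕ) :
    (x :: (s₁ ++ y :: s₂)).getD (skipRoot s₁.length i) d = (s₁ ++ s₂).getD i d := by
  unfold skipRoot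
  split_ifs with h
  · rw [getD_cons_succ, getD_append _ _ _ _ h, getD_append _ _ _ _ h]
  · rw [getD_cons_succ, getD_append_right _ _ _ _ (by omega),
      getD_append_right _ _ _ _ (by omega), show i + 1 - s₁.length = i - s₁.length + 1 by omega,
      getD_cons_succ]

theorem inBounds_map_skipRoot_left_iff {x y : β} :
    InBounds (x :: (s₁ ++ y :: s₂)) t (M.map (Prod.map (skipRoot s₁.length) id)) ↔
      InBounds (s₁ ++ s₂) t M := by
  simp only [InBounds, forall_mem_map, Prod.map_fst, Prod.map_snd, id, length_cons,
    length_append]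
  refine forall₂_congr fun p _ => ?_
  unfold skipRoot
  split_ifs <;> omega

theorem inBounds_map_skipRoot_right_iff {x y : β} :
    InBounds s (x :: (t₁ ++ y :: t₂)) (M.map (Prod.map id (skipRoot t₁.length))) ↔
      InBounds s (t₁ ++ t₂) M := by
  simp only [InBounds, forall_mem_map, Prod.map_fst, Prod.map_snd, id, length_cons,
    length_append]
  refine forall₂_congr fun p _ => ?_
  unfold skipRoot
  split_ifs <;> omega

/-- Aligns `[x] ++ (s ++ [y])` with `[x'] ++ (t ++ [y'])`: `x` with `x'`, `y` with `y'`, and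
`s` with `t` by `M`, where `k = s.length` and `l = t.length`. -/
def wrap (k l : ℕ) (M : List (ℕ × ℕ)) : List (ℕ × ℕ) :=
  shiftAppend 1 1 [(0, 0)] (shiftAppend k l M [(0, 0)])

theorem isMatching_wrap_iff {k l : ℕ} (hb : ∀ p ∈ M, p.1 < k ∧ p.2 < l) :
    IsMatching (wrap k l M) ↔ IsMatching M := by
  have h₀ : IsMatching [(0, 0)] := isChain_singleton _
  rw [wrap, isMatching_shiftAppend_iff (by simp), isMatching_shiftAppend_iff hb]
  simp only [h₀, true_and, and_true]

theorem inBounds_wrap {x y x' y' : β} (hb : InBounds s t M) :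
    InBounds ([x] ++ (s ++ [y])) ([x'] ++ (t ++ [y'])) (wrap s.length t.length M) :=
  (inBounds_shiftAppend_iff (s₁ := [x]) (t₁ := [x']) (by simp [InBounds])).2
    ((inBounds_shiftAppend_iff hb).2 (by simp [InBounds]))

def diagonal (n : ℕ) : List (ℕ × ℕ) := (range n).map fun i => (i, i)

theorem isMatching_diagonal (n : ℕ) : IsMatching (diagonal n) :=
  isMatching_iff_pairwise.mpr (pairwise_map.mpr (pairwise_lt_range.imp fun h => ⟨h, h⟩))

theorem inBounds_diagonal (s : List β) : InBounds s s (diagonal s.length) := by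
  simp [InBounds, diagonal]

variable [DecidableEq β]

def mismatches (s t : List β) (d : β) (M : List (ℕ × ℕ)) : ℕ :=
  M.countP fun p => decide (s.getD p.1 d ≠ t.getD p.2 d)

/-- `alignCost` without its truncated subtractions. -/
theorem alignCost_add_two_mul_length (h : IsMatching M) (hb : InBounds s t M) :
    alignCost s t d M + 2 * M.length = s.length + t.length + mismatches s t d M := by
  have h₁ := h.length_le_of_fst_lt fun p hp => (hb p hp).1
  have h₂ := h.length_le_of_snd_lt fun p hp => (hb p hp).2
  unfold alignCost mismatches
  omega

theorem mismatches_shiftAppend (hb : InBounds s₁ t₁ M₁) :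
    mismatches (s₁ ++ s₂) (t₁ ++ t₂) d (shiftAppend s₁.length t₁.length M₁ M₂) =
      mismatches s₁ t₁ d M₁ + mismatches s₂ t₂ d M₂ := by
  unfold mismatches shiftAppend
  rw [countP_append, countP_map]
  congr 1
  · refine countP_congr fun p hp => ?_
    rw [getD_append _ _ _ _ (hb p hp).1, getD_append _ _ _ _ (hb p hp).2]
  · refine countP_congr fun p _ => ?_
    simp only [Function.comp_apply, Prod.map_fst, Prod.map_snd, getD_append_add]

theorem alignCost_shiftAppend (h₁ : IsMatching M₁) (hb₁ : InBounds s₁ t₁ M₁)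
    (h₂ : IsMatching M₂) (hb₂ : InBounds s₂ t₂ M₂) :
    alignCost (s₁ ++ s₂) (t₁ ++ t₂) d (shiftAppend s₁.length t₁.length M₁ M₂) =
      alignCost s₁ t₁ d M₁ + alignCost s₂ t₂ d M₂ := by
  have e := alignCost_add_two_mul_length (d := d) ((isMatching_shiftAppend_iff hb₁).2 ⟨h₁, h₂⟩)
    ((inBounds_shiftAppend_iff hb₁).2 hb₂)
  have e₁ := alignCost_add_two_mul_length (d := d) h₁ hb₁
  have e₂ := alignCost_add_two_mul_length (d := d) h₂ hb₂
  have hl : (shiftAppend s₁.length t₁.length M₁ M₂).length = M₁.length + M₂.length := by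
    simp [shiftAppend]
  rw [mismatches_shiftAppend hb₁, hl, length_append, length_append] at e
  omega

theorem mismatches_map {s' t' : List β} {f g : ℕ → ℕ} (hs : ∀ i, s.getD (f i) d = s'.getD i d)
    (ht : ∀ j, t.getD (g j) d = t'.getD j d) :
    mismatches s t d (M.map (Prod.map f g)) = mismatches s' t' d M := by
  unfold mismatches
  rw [countP_map]
  exact countP_congr fun p _ => by
    simp only [Function.comp_apply, Prod.map_fst, Prod.map_snd, hs, ht]

theorem alignCost_diagonal (s : List β) (d : β) :
    alignCost s s d (diagonal s.length) = 0 := by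
  simp [alignCost, diagonal, countP_map]

theorem alignCost_map_skipRoot_left (x y : β) (h : IsMatching M)
    (hb : InBounds (s₁ ++ s₂) t M) :
    alignCost (x :: (s₁ ++ y :: s₂)) t d (M.map (Prod.map (skipRoot s₁.length) id)) =
      alignCost (s₁ ++ s₂) t d M + 2 := by
  have e := alignCost_add_two_mul_length (d := d)
    ((IsMatching.map_iff (skipRoot_strictMono _) strictMono_id).2 h)
    ((inBounds_map_skipRoot_left_iff (x := x) (y := y)).2 hb)
  have e' := alignCost_add_two_mul_length (d := d) h hb
  rw [mismatches_map (g := id) (getD_skipRoot x y s₁ s₂) fun _ => rfl, length_map] at e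
  simp only [length_cons, length_append] at e e'
  omega

theorem alignCost_map_skipRoot_right (x y : β) (h : IsMatching M)
    (hb : InBounds s (t₁ ++ t₂) M) :
    alignCost s (x :: (t₁ ++ y :: t₂)) d (M.map (Prod.map id (skipRoot t₁.length))) =
      alignCost s (t₁ ++ t₂) d M + 2 := by
  have e := alignCost_add_two_mul_length (d := d)
    ((IsMatching.map_iff strictMono_id (skipRoot_strictMono _)).2 h)
    ((inBounds_map_skipRoot_right_iff (x := x) (y := y)).2 hb)
  have e' := alignCost_add_two_mul_length (d := d) h hb
  rw [mismatches_map (f := id) (fun _ => rfl) (getD_skipRoot x y t₁ t₂), length_map] at e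
  simp only [length_cons, length_append] at e e'
  omega

theorem alignCost_wrap {x y x' y' : β} (h : IsMatching M) (hb : InBounds s t M) :
    alignCost ([x] ++ (s ++ [y])) ([x'] ++ (t ++ [y'])) d (wrap s.length t.length M) =
      alignCost s t d M + (if x = x' then 0 else 1) + (if y = y' then 0 else 1) := by
  have hsingle : ∀ u v : β, alignCost [u] [v] d [(0, 0)] = if u = v then 0 else 1 := by
    intro u v
    by_cases huv : u = v <;> simp [alignCost, huv]
  have h₀ : IsMatching [(0, 0)] := isChain_singleton _
  have hb₀ : ∀ u v : β, InBounds [u] [v] [(0, 0)] := by simp [InBounds]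
  have e := alignCost_shiftAppend (d := d) h₀ (hb₀ x x')
    ((isMatching_shiftAppend_iff hb).2 ⟨h, h₀⟩) ((inBounds_shiftAppend_iff hb).2 (hb₀ y y'))
  rw [length_singleton, length_singleton] at e
  rw [wrap, e, alignCost_shiftAppend h hb h₀ (hb₀ y y'), hsingle, hsingle]
  omega

end StringAlignment

/-- A matching containing `(0, 0)` and `(k + 1, l + 1)` consists of these two pairs, the pairs
strictly between them (`M₁`, shifted by one) and the pairs after them (`M₂`, shifted). -/
theorem IsMatching.eq_shiftAppend_wrap {M : List (ℕ × ℕ)} {k l : ℕ} (h : IsMatching M)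
    (h₀ : (0, 0) ∈ M) (hc : (k + 1, l + 1) ∈ M) :
    ∃ M₁ M₂, M = shiftAppend (k + 2) (l + 2) (wrap k l M₁) M₂ ∧
      ∀ q ∈ M₁, q.1 < k ∧ q.2 < l := by
  obtain ⟨A, B, rfl, hA, hB, -, hBm⟩ := h.eq_append_cons_of_mem h₀
  obtain rfl : A = [] := eq_nil_iff_forall_not_mem.mpr fun q hq => by
    have := hA q hq
    omega
  have hcB : (k + 1, l + 1) ∈ B := by simpa using hc
  obtain ⟨A', B', rfl, hA', hB', -, -⟩ := hBm.eq_append_cons_of_mem hcB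
  obtain ⟨M₁, rfl⟩ := exists_map_add_eq (m := 1) (n := 1) (A := A') fun q hq => by
    have := hB q (mem_append_left _ hq)
    omega
  obtain ⟨M₂, rfl⟩ := exists_map_add_eq (m := k + 2) (n := l + 2) (A := B') fun q hq => by
    have := hB' q hq
    simp only at this
    omega
  refine ⟨M₁, M₂, by simp [shiftAppend, wrap], fun q hq => ?_⟩
  have := hA' _ (mem_map_of_mem (f := Prod.map (· + 1) (· + 1)) hq)
  simp only [Prod.map_fst, Prod.map_snd] at this
  omega

section Composition

variable {M₁ M₂ : List (ℕ × ℕ)}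

theorem IsMatching.find?_fst_eq (h : IsMatching M₂) {q : ℕ × ℕ} (hq : q ∈ M₂) :
    M₂.find? (·.1 == q.1) = some q := by
  cases hf : M₂.find? (·.1 == q.1) with
  | none => exact absurd (find?_eq_none.mp hf q hq) (by simp)
  | some r =>
    have hr : r.1 = q.1 := by simpa using find?_some hf
    rw [h.eq_of_fst_eq (mem_of_find?_eq_some hf) hq hr]

/-- The pairs `(p, q) ∈ M₁ × M₂` that meet in the middle string, `p.2 = q.1`. -/
def alignCompPairs (M₁ M₂ : List (ℕ × ℕ)) : List ((ℕ × ℕ) × (ℕ × ℕ)) :=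
  M₁.filterMap fun p => (M₂.find? (·.1 == p.2)).map (p, ·)

def alignComp (M₁ M₂ : List (ℕ × ℕ)) : List (ℕ × ℕ) :=
  (alignCompPairs M₁ M₂).map fun c => (c.1.1, c.2.2)

theorem mem_alignCompPairs (h₂ : IsMatching M₂) {c : (ℕ × ℕ) × (ℕ × ℕ)} :
    c ∈ alignCompPairs M₁ M₂ ↔ c.1 ∈ M₁ ∧ c.2 ∈ M₂ ∧ c.1.2 = c.2.1 := by
  obtain ⟨p, q⟩ := c
  simp only [alignCompPairs, mem_filterMap, Option.map_eq_some_iff, Prod.mk.injEq]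
  constructor
  · rintro ⟨p, hp, q, hf, rfl, rfl⟩
    exact ⟨hp, mem_of_find?_eq_some hf, (by simpa using find?_some hf : q.1 = p.2).symm⟩
  · rintro ⟨hp, hq, he⟩
    exact ⟨p, hp, q, he ▸ h₂.find?_fst_eq hq, rfl, rfl⟩

theorem map_fst_alignCompPairs_sublist (M₁ M₂ : List (ℕ × ℕ)) :
    (alignCompPairs M₁ M₂).map Prod.fst <+ M₁ := by
  induction M₁ with
  | nil => simp [alignCompPairs]
  | cons p M₁ ih =>
    simp only [alignCompPairs, filterMap_cons] at ih ⊢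
    cases M₂.find? (·.1 == p.2) with
    | none => exact ih.cons p
    | some q => exact ih.cons_cons p

theorem pairwise_alignCompPairs (h₁ : IsMatching M₁) (h₂ : IsMatching M₂) :
    (alignCompPairs M₁ M₂).Pairwise fun c c' =>
      (c.1.1 < c'.1.1 ∧ c.1.2 < c'.1.2) ∧ (c.2.1 < c'.2.1 ∧ c.2.2 < c'.2.2) := by
  rw [alignCompPairs, pairwise_filterMap]
  refine (isMatching_iff_pairwise.mp h₁).imp fun {p p'} hpp' => ?_
  simp only [Option.map_eq_some_iff]
  rintro _ ⟨q, hq, rfl⟩ _ ⟨q', hq', rfl⟩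
  have hq₁ : q.1 = p.2 := by simpa using find?_some hq
  have hq₁' : q'.1 = p'.2 := by simpa using find?_some hq'
  have hlt : q.1 < q'.1 := by omega
  exact ⟨hpp', hlt, h₂.snd_lt_snd (mem_of_find?_eq_some hq) (mem_of_find?_eq_some hq') hlt⟩

theorem isMatching_alignComp (h₁ : IsMatching M₁) (h₂ : IsMatching M₂) :
    IsMatching (alignComp M₁ M₂) :=
  isMatching_iff_pairwise.mpr <| pairwise_map.mpr <|
    (pairwise_alignCompPairs h₁ h₂).imp fun h => ⟨h.1.1, h.2.2⟩

theorem mem_alignComp (h₂ : IsMatching M₂) {r : ℕ × ℕ} :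
    r ∈ alignComp M₁ M₂ ↔ ∃ j, (r.1, j) ∈ M₁ ∧ (j, r.2) ∈ M₂ := by
  simp only [alignComp, mem_map, mem_alignCompPairs h₂]
  constructor
  · rintro ⟨⟨p, q⟩, ⟨hp, hq, he⟩, rfl⟩
    exact ⟨p.2, hp, he ▸ hq⟩
  · rintro ⟨j, hp, hq⟩
    exact ⟨((r.1, j), (j, r.2)), ⟨hp, hq, rfl⟩, rfl⟩

/-- A middle position used by both matchings is the meeting point of a pair in
`alignCompPairs`. -/
theorem length_add_length_le_alignComp {n : ℕ} (h₁ : IsMatching M₁) (h₂ : IsMatching M₂)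
    (hb₁ : ∀ p ∈ M₁, p.2 < n) (hb₂ : ∀ q ∈ M₂, q.1 < n) :
    M₁.length + M₂.length ≤ n + (alignComp M₁ M₂).length := by
  classical
  set A := (M₁.map Prod.snd).toFinset
  set B := (M₂.map Prod.fst).toFinset
  have hA : A.card = M₁.length := by
    rw [toFinset_card_of_nodup, length_map]
    exact pairwise_map.mpr ((isMatching_iff_pairwise.mp h₁).imp fun h => h.2.ne)
  have hB : B.card = M₂.length := by
    rw [toFinset_card_of_nodup, length_map]
    exact pairwise_map.mpr ((isMatching_iff_pairwise.mp h₂).imp fun h => h.1.ne)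
  have hAB : (A ∪ B).card ≤ n := by
    refine (Finset.card_le_card fun j hj => ?_).trans_eq (Finset.card_range n)
    simp only [Finset.mem_union, A, B, mem_toFinset, mem_map] at hj
    rcases hj with ⟨p, hp, rfl⟩ | ⟨q, hq, rfl⟩
    exacts [Finset.mem_range.mpr (hb₁ p hp), Finset.mem_range.mpr (hb₂ q hq)]
  have hinter : (A ∩ B).card ≤ (alignComp M₁ M₂).length := by
    refine (Finset.card_le_card fun j hj => ?_).trans
      ((toFinset_card_le ((alignCompPairs M₁ M₂).map fun c => c.1.2)).trans_eq
        (by simp [alignComp]))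
    simp only [Finset.mem_inter, A, B, mem_toFinset, mem_map] at hj ⊢
    obtain ⟨⟨p, hp, rfl⟩, ⟨q, hq, he⟩⟩ := hj
    exact ⟨(p, q), (mem_alignCompPairs h₂).mpr ⟨hp, hq, he.symm⟩, rfl⟩
  have := Finset.card_union_add_card_inter A B
  omega

theorem countP_or_le {γ : Type*} (p q : γ → Bool) (l : List γ) :
    l.countP (fun x => p x || q x) ≤ l.countP p + l.countP q := by
  induction l with
  | nil => simp
  | cons x l ih =>
    simp only [countP_cons]
    cases p x <;> cases q x <;> simp <;> omega

variable {β : Type} [DecidableEq β]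

/-- A substitution in the composed alignment forces one in `M₁` or in `M₂`; the pairs of
`alignCompPairs` use each pair of `M₁` and of `M₂` at most once. -/
theorem mismatches_alignComp_le (h₁ : IsMatching M₁) (h₂ : IsMatching M₂) (s t u : List β)
    (d : β) :
    mismatches s u d (alignComp M₁ M₂) ≤ mismatches s t d M₁ + mismatches t u d M₂ := by
  set P := alignCompPairs M₁ M₂
  have hnd : (P.map Prod.snd).Nodup :=
    pairwise_map.mpr ((pairwise_alignCompPairs h₁ h₂).imp fun h =>
      ne_of_apply_ne Prod.fst h.2.1.ne)
  have hsub : P.map Prod.snd ⊆ M₂ := fun q hq => by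
    obtain ⟨c, hc, rfl⟩ := mem_map.mp hq
    exact ((mem_alignCompPairs h₂).mp hc).2.1
  calc mismatches s u d (alignComp M₁ M₂)
      ≤ P.countP fun c => decide (s.getD c.1.1 d ≠ t.getD c.1.2 d) ||
          decide (t.getD c.2.1 d ≠ u.getD c.2.2 d) := by
        rw [mismatches, alignComp, countP_map]
        refine countP_mono_left fun c hc => ?_
        have he := ((mem_alignCompPairs h₂).mp hc).2.2
        simp only [Function.comp_apply, he, decide_eq_true_eq, Bool.or_eq_true]
        intro hne
        by_contra! hc'
        exact hne (hc'.1.trans hc'.2)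
    _ ≤ mismatches s t d (P.map Prod.fst) + mismatches t u d (P.map Prod.snd) := by
        rw [mismatches, mismatches, countP_map, countP_map]
        exact countP_or_le _ _ _
    _ ≤ mismatches s t d M₁ + mismatches t u d M₂ :=
        add_le_add ((map_fst_alignCompPairs_sublist M₁ M₂).countP_le)
          ((hnd.subperm hsub).countP_le _)

theorem alignCost_alignComp_le {s t u : List β} {d : β} (h₁ : IsMatching M₁)
    (hb₁ : InBounds s t M₁) (h₂ : IsMatching M₂) (hb₂ : InBounds t u M₂) :
    alignCost s u d (alignComp M₁ M₂) ≤ alignCost s t d M₁ + alignCost t u d M₂ := by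
  have hb : InBounds s u (alignComp M₁ M₂) := fun r hr => by
    obtain ⟨j, hj₁, hj₂⟩ := (mem_alignComp h₂).mp hr
    exact ⟨(hb₁ _ hj₁).1, (hb₂ _ hj₂).2⟩
  have e := alignCost_add_two_mul_length (d := d) (isMatching_alignComp h₁ h₂) hb
  have e₁ := alignCost_add_two_mul_length (d := d) h₁ hb₁
  have e₂ := alignCost_add_two_mul_length (d := d) h₂ hb₂
  have := length_add_length_le_alignComp h₁ h₂ (fun p hp => (hb₁ p hp).2)
    (fun q hq => (hb₂ q hq).1)
  have := mismatches_alignComp_le h₁ h₂ s t u d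
  omega

end Composition

section Forests

variable {α : Type}

@[simp] theorem pforest_nil : pforest ([] : List (LTree α)) = [] := by simp [pforest]

@[simp] theorem pforest_cons (t : LTree α) (F : List (LTree α)) :
    pforest (t :: F) = pstr t ++ pforest F := by simp [pforest]

@[simp] theorem pstr_node (a : α) (ts : List (LTree α)) :
    pstr (.node a ts) = (true, a) :: (pforest ts ++ [(false, a)]) := by simp [pstr]

@[simp] theorem pforest_append (F G : List (LTree α)) :
    pforest (F ++ G) = pforest F ++ pforest G := by
  induction F with
  | nil => simp
  | cons t F ih => simp [ih]

theorem pforest_node_cons (a : α) (ts F : List (LTree α)) :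
    pforest (.node a ts :: F) = (true, a) :: (pforest ts ++ (false, a) :: pforest F) := by
  simp

theorem pforest_singleton_node (a : α) (ts : List (LTree α)) :
    pforest [.node a ts] = [(true, a)] ++ (pforest ts ++ [(false, a)]) := by
  simp

theorem forest_induction {motive : List (LTree α) → Prop} (nil : motive [])
    (node_cons : ∀ a ts F, motive ts → motive F → motive (.node a ts :: F)) :
    ∀ F, motive F
  | [] => nil
  | .node a ts :: F => node_cons a ts F (forest_induction nil node_cons ts)
      (forest_induction nil node_cons F)

def nodePos (F : List (LTree α)) : Set (ℕ × ℕ) := {p | ∃ addr, fpos F addr = some p}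

@[simp] theorem nodePos_nil : nodePos ([] : List (LTree α)) = ∅ := by
  simp [nodePos, fpos]

theorem nodePos_node_cons' (a : α) (ts F : List (LTree α)) :
    nodePos (.node a ts :: F) =
      insert (0, (pforest ts).length + 1) (Prod.map (· + 1) (· + 1) '' nodePos ts) ∪
        Prod.map (· + ((pforest ts).length + 2)) (· + ((pforest ts).length + 2)) ''
          nodePos F := by
  ext ⟨o, c⟩
  simp only [nodePos, Set.mem_union, Set.mem_insert_iff, Set.mem_image, Set.mem_ofPred_eq,
    Prod.exists, Prod.map, Prod.mk.injEq]
  constructor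
  · rintro ⟨addr, h⟩
    match addr, h with
    | 0 :: [], h => left; left; simp_all [fpos, tpos]
    | 0 :: k :: r, h =>
      simp only [fpos, tpos, Option.map_eq_some_iff, Prod.exists, Prod.mk.injEq] at h
      obtain ⟨o', c', hts, rfl, rfl⟩ := h
      exact Or.inl (Or.inr ⟨o', c', ⟨k :: r, hts⟩, rfl, rfl⟩)
    | (k + 1) :: r, h =>
      simp only [fpos, Option.map_eq_some_iff, Prod.exists, Prod.mk.injEq, pstr_node,
        length_cons, length_append, length_nil] at h
      obtain ⟨o', c', hF, rfl, rfl⟩ := h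
      exact Or.inr ⟨o', c', ⟨k :: r, hF⟩, by omega, by omega⟩
  · rintro ((⟨rfl, rfl⟩ | ⟨o', c', ⟨addr, h⟩, rfl, rfl⟩) | ⟨o', c', ⟨addr, h⟩, rfl, rfl⟩)
    · exact ⟨[0], by simp [fpos, tpos]⟩
    · match ts, addr, h with
      | _ :: _, k :: r, h => exact ⟨0 :: k :: r, by simp [fpos, tpos, h]⟩
    · match F, addr, h with
      | _ :: _, k :: r, h => exact ⟨(k + 1) :: r, by simp [fpos, h]⟩

theorem lt_of_mem_nodePos {F : List (LTree α)} {u : ℕ × ℕ} (hu : u ∈ nodePos F) :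
    u.1 < u.2 ∧ u.2 < (pforest F).length := by
  induction F using forest_induction generalizing u with
  | nil => simp at hu
  | node_cons a ts F ih₁ ih₂ =>
    rw [nodePos_node_cons'] at hu
    rcases hu with ((rfl | ⟨w, hw, rfl⟩) | ⟨w, hw, rfl⟩)
    · simp
    · have := ih₁ hw
      simp
      omega
    · have := ih₂ hw
      simp
      omega

theorem lt_length_of_mem_nodePos {F : List (LTree α)} {u : ℕ × ℕ} (hu : u ∈ nodePos F) :
    u.1 < (pforest F).length ∧ u.2 < (pforest F).length :=
  ⟨(lt_of_mem_nodePos hu).1.trans (lt_of_mem_nodePos hu).2, (lt_of_mem_nodePos hu).2⟩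

theorem exists_mem_nodePos {F : List (LTree α)} {i : ℕ} (hi : i < (pforest F).length) :
    ∃ u ∈ nodePos F, i = u.1 ∨ i = u.2 := by
  induction F using forest_induction generalizing i with
  | nil => simp at hi
  | node_cons a ts F ih₁ ih₂ =>
    simp only [nodePos_node_cons', Set.mem_union, Set.mem_insert_iff, Set.mem_image]
    simp only [pforest_cons, pstr_node, length_append, length_cons, length_nil] at hi
    by_cases h₀ : i = 0
    · exact ⟨_, Or.inl (Or.inl rfl), Or.inl h₀⟩
    by_cases hk : i = (pforest ts).length + 1
    · exact ⟨_, Or.inl (Or.inl rfl), Or.inr hk⟩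
    by_cases hin : i ≤ (pforest ts).length
    · obtain ⟨w, hw, he⟩ := ih₁ (i := i - 1) (by omega)
      exact ⟨_, Or.inl (Or.inr ⟨w, hw, rfl⟩), by simp; omega⟩
    · obtain ⟨w, hw, he⟩ := ih₂ (i := i - ((pforest ts).length + 2)) (by omega)
      exact ⟨_, Or.inr ⟨w, hw, rfl⟩, by simp; omega⟩

theorem nodePos_append (F G : List (LTree α)) :
    nodePos (F ++ G) =
      nodePos F ∪ Prod.map (· + (pforest F).length) (· + (pforest F).length) '' nodePos G := by
  induction F using forest_induction with
  | nil => simp [Prod.map_id']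
  | node_cons a ts F _ ih =>
    rw [cons_append, nodePos_node_cons', nodePos_node_cons', ih, Set.image_union,
      Set.image_image, Set.union_assoc]
    congr 2
    refine Set.image_congr fun p _ => ?_
    simp only [Prod.map, pforest_cons, pstr_node, length_append, length_cons, length_nil]
    ext <;> simp only <;> omega

theorem nodePos_singleton_node (a : α) (ts : List (LTree α)) :
    nodePos [.node a ts] =
      insert (0, (pforest ts).length + 1) (Prod.map (· + 1) (· + 1) '' nodePos ts) := by
  simp [nodePos_node_cons']

theorem nodePos_node_cons (a : α) (ts F : List (LTree α)) :
    nodePos (.node a ts :: F) = insert (0, (pforest ts).length + 1)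
      (Prod.map (skipRoot (pforest ts).length) (skipRoot (pforest ts).length) ''
        nodePos (ts ++ F)) := by
  rw [nodePos_node_cons', nodePos_append, Set.image_union, Set.image_image, Set.insert_union]
  congr 2
  · refine Set.image_congr fun u hu => ?_
    have := lt_of_mem_nodePos hu
    simp only [Prod.map, skipRoot]
    ext <;> simp only <;> split_ifs <;> omega
  · refine Set.image_congr fun u _ => ?_
    simp only [Prod.map, skipRoot]
    ext <;> simp only <;> split_ifs <;> omega

theorem mem_nodePos_node_cons {a : α} {ts F : List (LTree α)} {v : ℕ × ℕ}
    (hv : v ∈ nodePos (.node a ts :: F)) :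
    v = (0, (pforest ts).length + 1) ∨
      (v.1 ≠ 0 ∧ v.1 ≠ (pforest ts).length + 1 ∧ v.2 ≠ (pforest ts).length + 1) := by
  rw [nodePos_node_cons] at hv
  rcases hv with rfl | ⟨w, -, rfl⟩
  · exact Or.inl rfl
  · exact Or.inr ⟨skipRoot_ne_zero _ _, skipRoot_ne _ _, skipRoot_ne _ _⟩

end Forests

/-- The node condition of `TreeAligned`, with the nodes of each side given by their pairs
`(o(u), c(u))` of parenthesis positions and the alignment by a set `S` of position pairs. -/
def NodesAligned (N N' S : Set (ℕ × ℕ)) : Prop :=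
  ∀ u ∈ N, (∀ q ∈ S, q.1 ≠ u.1 ∧ q.1 ≠ u.2) ∨ ∃ v ∈ N', (u.1, v.1) ∈ S ∧ (u.2, v.2) ∈ S

section NodesAligned

variable {N N₁ N₂ N' N₁' N₂' S S₁ S₂ : Set (ℕ × ℕ)}

theorem nodesAligned_union_left :
    NodesAligned (N₁ ∪ N₂) N' S ↔ NodesAligned N₁ N' S ∧ NodesAligned N₂ N' S := by
  simp only [NodesAligned, Set.mem_union, or_imp, forall_and]

theorem nodesAligned_union_right (h : ∀ u ∈ N, ∀ v ∈ N₂', (u.1, v.1) ∉ S) :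
    NodesAligned N (N₁' ∪ N₂') S ↔ NodesAligned N N₁' S := by
  refine forall₂_congr fun u hu => or_congr_right ⟨?_, ?_⟩
  · rintro ⟨v, hv | hv, h₁, h₂⟩
    exacts [⟨v, hv, h₁, h₂⟩, absurd h₁ (h u hu v hv)]
  · rintro ⟨v, hv, h₁, h₂⟩
    exact ⟨v, Or.inl hv, h₁, h₂⟩

theorem nodesAligned_union_pairs (h : ∀ u ∈ N, ∀ q ∈ S₂, q.1 ≠ u.1 ∧ q.1 ≠ u.2) :
    NodesAligned N N' (S₁ ∪ S₂) ↔ NodesAligned N N' S₁ := by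
  refine forall₂_congr fun u hu => or_congr
    ⟨fun h' q hq => h' q (Or.inl hq), fun h' q hq => hq.elim (h' q) (h u hu q)⟩ ⟨?_, ?_⟩
  · rintro ⟨v, hv, h₁ | h₁, h₂ | h₂⟩
    · exact ⟨v, hv, h₁, h₂⟩
    · exact absurd rfl (h u hu _ h₂).2
    all_goals exact absurd rfl (h u hu _ h₁).1
  · rintro ⟨v, hv, h₁, h₂⟩
    exact ⟨v, hv, Or.inl h₁, Or.inl h₂⟩

theorem nodesAligned_image {f g : ℕ → ℕ} (hf : Function.Injective f)
    (hg : Function.Injective g) :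
    NodesAligned (Prod.map f f '' N) (Prod.map g g '' N') (Prod.map f g '' S) ↔
      NodesAligned N N' S := by
  have key : ∀ x y, (f x, g y) ∈ Prod.map f g '' S ↔ (x, y) ∈ S := fun x y =>
    (Prod.map_injective.mpr ⟨hf, hg⟩).mem_set_image (a := (x, y))
  simp only [NodesAligned, Set.forall_mem_image, Set.exists_mem_image, Prod.map_fst,
    Prod.map_snd, hf.ne_iff, key]

theorem nodesAligned_append {m n : ℕ} (hN₁ : ∀ u ∈ N₁, u.1 < m ∧ u.2 < m)
    (hN₁' : ∀ v ∈ N₁', v.1 < n) (hS₁ : ∀ q ∈ S₁, q.1 < m ∧ q.2 < n) :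
    NodesAligned (N₁ ∪ Prod.map (· + m) (· + m) '' N₂) (N₁' ∪ Prod.map (· + n) (· + n) '' N₂')
        (S₁ ∪ Prod.map (· + m) (· + n) '' S₂) ↔
      NodesAligned N₁ N₁' S₁ ∧ NodesAligned N₂ N₂' S₂ := by
  rw [nodesAligned_union_left]
  refine and_congr ?_ ?_
  · rw [nodesAligned_union_pairs, nodesAligned_union_right]
    · rintro u hu _ ⟨v, -, rfl⟩ hS
      have := hS₁ _ hS
      simp at this
    · rintro u hu _ ⟨q, -, rfl⟩
      have := hN₁ u hu
      simp
      omega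
  · rw [Set.union_comm S₁, Set.union_comm N₁', nodesAligned_union_pairs,
      nodesAligned_union_right, nodesAligned_image (add_left_injective m) (add_left_injective n)]
    · rintro _ ⟨u, -, rfl⟩ v hv ⟨q, -, hq⟩
      have := hN₁' v hv
      simp only [Prod.map, Prod.mk.injEq] at hq
      omega
    · rintro _ ⟨u, -, rfl⟩ q hq
      have := hS₁ q hq
      simp
      omega

theorem nodesAligned_wrap {k l : ℕ} (hN : ∀ u ∈ N, u.1 < k ∧ u.2 < k) :
    NodesAligned (insert (0, k + 1) (Prod.map (· + 1) (· + 1) '' N))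
        (insert (0, l + 1) (Prod.map (· + 1) (· + 1) '' N'))
        (Prod.map (· + 1) (· + 1) '' S ∪ {(0, 0), (k + 1, l + 1)}) ↔
      NodesAligned N N' S := by
  rw [NodesAligned, Set.forall_mem_insert, ← NodesAligned,
    and_iff_right (Or.inr ⟨(0, l + 1), Set.mem_insert _ _, by simp, by simp⟩),
    Set.insert_eq, Set.union_comm, nodesAligned_union_pairs, nodesAligned_union_right,
    nodesAligned_image (add_left_injective 1) (add_left_injective 1)]
  · rintro _ ⟨u, -, rfl⟩ v rfl ⟨q, -, hq⟩
    simp only [Prod.map, Prod.mk.injEq] at hq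
    omega
  · rintro _ ⟨u, hu, rfl⟩ q hq
    have := hN u hu
    rcases hq with rfl | rfl
    · simp
    · simp
      omega

theorem nodesAligned_skipRoot_left {k : ℕ} :
    NodesAligned (insert (0, k + 1) (Prod.map (skipRoot k) (skipRoot k) '' N)) N'
        (Prod.map (skipRoot k) id '' S) ↔ NodesAligned N N' S := by
  have h := nodesAligned_image (N := N) (N' := N') (S := S) (skipRoot_strictMono k).injective
    Function.injective_id
  rw [Prod.map_id, Set.image_id] at h
  rw [NodesAligned, Set.forall_mem_insert, ← NodesAligned, and_iff_right (Or.inl ?_), h]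
  rintro _ ⟨q, -, rfl⟩
  exact ⟨skipRoot_ne_zero _ _, skipRoot_ne _ _⟩

theorem nodesAligned_skipRoot_right {l : ℕ} :
    NodesAligned N (insert (0, l + 1) (Prod.map (skipRoot l) (skipRoot l) '' N'))
        (Prod.map id (skipRoot l) '' S) ↔ NodesAligned N N' S := by
  have h := nodesAligned_image (N := N) (N' := N') (S := S) Function.injective_id
    (skipRoot_strictMono l).injective
  rw [Prod.map_id, Set.image_id] at h
  rw [Set.insert_eq, Set.union_comm, nodesAligned_union_right, h]
  rintro u - v rfl ⟨q, -, hq⟩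
  simp only [Prod.map, Prod.mk.injEq] at hq
  exact skipRoot_ne_zero _ _ hq.2

/-- As `S₁` is functional, a node aligned by `S₁` with a node that `S₂` deletes is deleted by
the composition. -/
theorem NodesAligned.comp {N'' : Set (ℕ × ℕ)} (h₁ : NodesAligned N N' S₁)
    (h₂ : NodesAligned N' N'' S₂) (hS₁ : ∀ p ∈ S₁, ∀ q ∈ S₁, p.1 = q.1 → p = q) :
    NodesAligned N N'' (SetRel.comp S₁ S₂) := by
  intro u hu
  rcases h₁ u hu with hdel | ⟨v, hv, hv₁, hv₂⟩
  · left
    rintro ⟨x, z⟩ ⟨j, hj, -⟩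
    exact hdel (x, j) hj
  rcases h₂ v hv with hdel | ⟨w, hw, hw₁, hw₂⟩
  · left
    rintro ⟨x, z⟩ ⟨j, hj, hjz⟩
    constructor
    · rintro rfl
      cases hS₁ _ hj _ hv₁ rfl
      exact (hdel _ hjz).1 rfl
    · rintro rfl
      cases hS₁ _ hj _ hv₂ rfl
      exact (hdel _ hjz).2 rfl
  · exact Or.inr ⟨w, hw, ⟨v.1, hv₁, hw₁⟩, ⟨v.2, hv₂, hw₂⟩⟩

end NodesAligned

section TreeAlignment

variable {α : Type}

theorem treeAligned_iff {F G : List (LTree α)} {M : List (ℕ × ℕ)} :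
    TreeAligned F G M ↔ IsMatching M ∧ InBounds (pforest F) (pforest G) M ∧
      NodesAligned (nodePos F) (nodePos G) {q | q ∈ M} := by
  simp only [TreeAligned, NodesAligned, nodePos, Set.mem_ofPred_eq, forall_exists_index,
    Prod.forall, Prod.exists]
  refine and_congr_right' (and_congr_right' ⟨fun h o c addr hf => ?_, fun h addr o c hf => ?_⟩)
  · rcases h addr o c hf with h' | ⟨b, ov, cv, hb, h₁, h₂⟩
    exacts [Or.inl h', Or.inr ⟨ov, cv, ⟨b, hb⟩, h₁, h₂⟩]
  · rcases h o c addr hf with h' | ⟨ov, cv, ⟨b, hb⟩, h₁, h₂⟩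
    exacts [Or.inl h', Or.inr ⟨b, ov, cv, hb, h₁, h₂⟩]

theorem setOf_mem_shiftAppend (m n : ℕ) (M₁ M₂ : List (ℕ × ℕ)) :
    {q | q ∈ shiftAppend m n M₁ M₂} =
      {q | q ∈ M₁} ∪ Prod.map (· + m) (· + n) '' {q | q ∈ M₂} := by
  ext
  simp [shiftAppend]

theorem setOf_mem_map (f : ℕ × ℕ → ℕ × ℕ) (M : List (ℕ × ℕ)) :
    {q | q ∈ M.map f} = f '' {q | q ∈ M} := by
  ext
  simp

theorem treeAligned_shiftAppend_iff {F₁ F₂ G₁ G₂ : List (LTree α)} {M₁ M₂ : List (ℕ × ℕ)}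
    (hb : InBounds (pforest F₁) (pforest G₁) M₁) :
    TreeAligned (F₁ ++ F₂) (G₁ ++ G₂)
        (shiftAppend (pforest F₁).length (pforest G₁).length M₁ M₂) ↔
      TreeAligned F₁ G₁ M₁ ∧ TreeAligned F₂ G₂ M₂ := by
  simp only [treeAligned_iff, pforest_append, isMatching_shiftAppend_iff hb,
    inBounds_shiftAppend_iff hb, nodePos_append, setOf_mem_shiftAppend]
  rw [nodesAligned_append (S₁ := {q | q ∈ M₁}) (fun u => lt_length_of_mem_nodePos)
    (fun v hv => (lt_length_of_mem_nodePos hv).1) fun q hq => hb q hq]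
  tauto

theorem treeAligned_wrap_iff {a b : α} {ts ss : List (LTree α)} {M : List (ℕ × ℕ)}
    (hb : InBounds (pforest ts) (pforest ss) M) :
    TreeAligned [.node a ts] [.node b ss] (wrap (pforest ts).length (pforest ss).length M) ↔
      TreeAligned ts ss M := by
  have hw : {q | q ∈ wrap (pforest ts).length (pforest ss).length M} =
      Prod.map (· + 1) (· + 1) '' {q | q ∈ M} ∪
        {(0, 0), ((pforest ts).length + 1, (pforest ss).length + 1)} := by
    ext q
    simp only [wrap, setOf_mem_shiftAppend]
    simp only [Set.mem_union, Set.mem_image, Set.mem_insert_iff, Set.mem_singleton_iff]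
    aesop
  rw [treeAligned_iff, treeAligned_iff, isMatching_wrap_iff hb, pforest_singleton_node,
    pforest_singleton_node, nodePos_singleton_node, nodePos_singleton_node, hw,
    nodesAligned_wrap fun u => lt_length_of_mem_nodePos]
  simp only [inBounds_wrap hb, hb, true_and]

theorem treeAligned_map_skipRoot_left_iff {a : α} {ts F G : List (LTree α)}
    {M : List (ℕ × ℕ)} :
    TreeAligned (.node a ts :: F) G (M.map (Prod.map (skipRoot (pforest ts).length) id)) ↔
      TreeAligned (ts ++ F) G M := by
  rw [treeAligned_iff, treeAligned_iff,
    IsMatching.map_iff (skipRoot_strictMono _) strictMono_id, pforest_node_cons, pforest_append,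
    inBounds_map_skipRoot_left_iff, nodePos_node_cons, setOf_mem_map, nodesAligned_skipRoot_left]

theorem treeAligned_map_skipRoot_right_iff {b : α} {ss F G : List (LTree α)}
    {M : List (ℕ × ℕ)} :
    TreeAligned F (.node b ss :: G) (M.map (Prod.map id (skipRoot (pforest ss).length))) ↔
      TreeAligned F (ss ++ G) M := by
  rw [treeAligned_iff, treeAligned_iff,
    IsMatching.map_iff strictMono_id (skipRoot_strictMono _), pforest_node_cons, pforest_append,
    inBounds_map_skipRoot_right_iff, nodePos_node_cons, setOf_mem_map,
    nodesAligned_skipRoot_right]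

theorem treeAligned_diagonal (F : List (LTree α)) :
    TreeAligned F F (diagonal (pforest F).length) := by
  refine treeAligned_iff.mpr ⟨isMatching_diagonal _, inBounds_diagonal _, fun u hu => ?_⟩
  have := lt_length_of_mem_nodePos hu
  exact Or.inr ⟨u, hu, by simp [diagonal]; omega, by simp [diagonal]; omega⟩

theorem setOf_mem_alignComp {M₁ M₂ : List (ℕ × ℕ)} (h₂ : IsMatching M₂) :
    {q | q ∈ alignComp M₁ M₂} = SetRel.comp {q | q ∈ M₁} {q | q ∈ M₂} := by
  ext ⟨x, z⟩
  simp [mem_alignComp h₂]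

theorem TreeAligned.comp {F G H : List (LTree α)} {M₁ M₂ : List (ℕ × ℕ)}
    (h₁ : TreeAligned F G M₁) (h₂ : TreeAligned G H M₂) : TreeAligned F H (alignComp M₁ M₂) := by
  rw [treeAligned_iff] at h₁ h₂ ⊢
  refine ⟨isMatching_alignComp h₁.1 h₂.1, fun r hr => ?_, ?_⟩
  · obtain ⟨j, hj₁, hj₂⟩ := (mem_alignComp h₂.1).mp hr
    exact ⟨(h₁.2.1 _ hj₁).1, (h₂.2.1 _ hj₂).2⟩
  · rw [setOf_mem_alignComp h₂.1]
    exact h₁.2.2.comp h₂.2.2 fun p hp q hq => h₁.1.eq_of_fst_eq hp hq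

section Cost

variable [DecidableEq α] (d : Bool × α)

theorem alignCost_wrap_node {a b : α} {ts ss : List (LTree α)} {M : List (ℕ × ℕ)}
    (h : IsMatching M) (hb : InBounds (pforest ts) (pforest ss) M) :
    alignCost (pforest [.node a ts]) (pforest [.node b ss]) d
        (wrap (pforest ts).length (pforest ss).length M) =
      alignCost (pforest ts) (pforest ss) d M + if a = b then 0 else 2 := by
  rw [pforest_singleton_node, pforest_singleton_node, alignCost_wrap h hb]
  by_cases hab : a = b <;> simp [hab]

theorem alignCost_map_skipRoot_left_node {a : α} {ts F G : List (LTree α)}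
    {M : List (ℕ × ℕ)} (h : TreeAligned (ts ++ F) G M) :
    alignCost (pforest (.node a ts :: F)) (pforest G) d
        (M.map (Prod.map (skipRoot (pforest ts).length) id)) =
      alignCost (pforest (ts ++ F)) (pforest G) d M + 2 := by
  have hb := h.2.1
  rw [pforest_append] at hb ⊢
  rw [pforest_node_cons]
  exact alignCost_map_skipRoot_left _ _ h.1 hb

theorem alignCost_map_skipRoot_right_node {b : α} {ss F G : List (LTree α)}
    {M : List (ℕ × ℕ)} (h : TreeAligned F (ss ++ G) M) :
    alignCost (pforest F) (pforest (.node b ss :: G)) d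
        (M.map (Prod.map id (skipRoot (pforest ss).length))) =
      alignCost (pforest F) (pforest (ss ++ G)) d M + 2 := by
  have hb := h.2.1
  rw [pforest_append] at hb ⊢
  rw [pforest_node_cons]
  exact alignCost_map_skipRoot_right _ _ h.1 hb

end Cost

end TreeAlignment

section EditDistance

variable {α : Type}

section Edits

variable {F G H F' G' : List (LTree α)} {m n : ℕ}

theorem FEdits.trans (h₁ : FEdits m F G) (h₂ : FEdits n G H) : FEdits (m + n) F H := by
  induction h₁ with
  | refl => simpa using h₂
  | step s _ ih => simpa [Nat.add_right_comm] using FEdits.step s (ih h₂)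

theorem FEdits.single (h : FStep F G) : FEdits 1 F G :=
  .step h (.refl G)

theorem FStep.append_right (h : FStep F G) (post : List (LTree α)) :
    FStep (F ++ post) (G ++ post) := by
  cases h with
  | relabel pre post' ts a b => simpa using FStep.relabel pre (post' ++ post) ts a b
  | delete pre post' ts a => simpa using FStep.delete pre (post' ++ post) ts a
  | insert pre mid post' a => simpa using FStep.insert pre mid (post' ++ post) a
  | congr pre post' ts ts' a h => simpa using FStep.congr pre (post' ++ post) ts ts' a h

theorem FStep.cons (t : LTree α) (h : FStep F G) : FStep (t :: F) (t :: G) := by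
  cases h with
  | relabel pre post ts a b => simpa using FStep.relabel (t :: pre) post ts a b
  | delete pre post ts a => simpa using FStep.delete (t :: pre) post ts a
  | insert pre mid post a => simpa using FStep.insert (t :: pre) mid post a
  | congr pre post ts ts' a h => simpa using FStep.congr (t :: pre) post ts ts' a h

theorem FEdits.append_right (h : FEdits n F G) (post : List (LTree α)) :
    FEdits n (F ++ post) (G ++ post) := by
  induction h with
  | refl => exact .refl _
  | step s _ ih => exact .step (s.append_right post) ih

theorem FEdits.cons (t : LTree α) (h : FEdits n F G) : FEdits n (t :: F) (t :: G) := by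
  induction h with
  | refl => exact .refl _
  | step s _ ih => exact .step (s.cons t) ih

theorem FEdits.node (a : α) (F : List (LTree α)) {ts ss : List (LTree α)} (h : FEdits n ts ss) :
    FEdits n (.node a ts :: F) (.node a ss :: F) := by
  induction h with
  | refl => exact .refl _
  | step s _ ih => exact .step (by simpa using FStep.congr [] F _ _ a s) ih

theorem exists_fedits_nil (F : List (LTree α)) : ∃ n, FEdits n F [] := by
  induction F using forest_induction with
  | nil => exact ⟨0, .refl []⟩
  | node_cons a ts F ih₁ ih₂ =>
    obtain ⟨m, hm⟩ := ih₁
    obtain ⟨n, hn⟩ := ih₂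
    exact ⟨_, .step (by simpa using FStep.delete [] F ts a) ((hm.append_right F).trans hn)⟩

theorem exists_nil_fedits (G : List (LTree α)) : ∃ n, FEdits n [] G := by
  induction G using forest_induction with
  | nil => exact ⟨0, .refl []⟩
  | node_cons b ss G ih₁ ih₂ =>
    obtain ⟨m, hm⟩ := ih₁
    obtain ⟨n, hn⟩ := ih₂
    exact ⟨_, (hn.trans (hm.append_right G)).trans
      (.single (by simpa using FStep.insert [] ss G b))⟩

theorem ted_le (h : FEdits n F G) : ted F G ≤ n :=
  Nat.sInf_le h

theorem fedits_ted (F G : List (LTree α)) : FEdits (ted F G) F G := by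
  obtain ⟨m, hm⟩ := exists_fedits_nil F
  obtain ⟨n, hn⟩ := exists_nil_fedits G
  exact Nat.sInf_mem (s := {n | FEdits n F G}) ⟨_, hm.trans hn⟩

theorem ted_nil_nil : ted ([] : List (LTree α)) [] = 0 :=
  Nat.le_zero.mp (ted_le (.refl []))

theorem ted_le_of_fstep_left (h : FStep F F') : ted F G ≤ ted F' G + 1 :=
  ted_le (by simpa [add_comm] using (FEdits.single h).trans (fedits_ted F' G))

theorem ted_le_of_fstep_right (h : FStep G' G) : ted F G ≤ ted F G' + 1 :=
  ted_le ((fedits_ted F G').trans (.single h))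

theorem ted_node_cons_le [DecidableEq α] (a b : α) (ts ss F G : List (LTree α)) :
    ted (.node a ts :: F) (.node b ss :: G) ≤ ted ts ss + ted F G + if a = b then 0 else 1 := by
  have h := ((fedits_ted ts ss).node a F).trans ((fedits_ted F G).cons (.node a ss))
  split_ifs with hab
  · subst hab
    exact ted_le h
  · exact ted_le (h.trans (.single (by simpa using FStep.relabel [] G ss a b)))

end Edits

theorem TreeAligned.roots_aligned_of_touched {a b : α} {ts ss F G : List (LTree α)}
    {M : List (ℕ × ℕ)}
    (h : TreeAligned (.node a ts :: F) (.node b ss :: G) M)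
    (hF : ¬ ∀ q ∈ M, q.1 ≠ 0 ∧ q.1 ≠ (pforest ts).length + 1)
    (hG : ¬ ∀ q ∈ M, q.2 ≠ 0 ∧ q.2 ≠ (pforest ss).length + 1) :
    (0, 0) ∈ M ∧ ((pforest ts).length + 1, (pforest ss).length + 1) ∈ M := by
  obtain ⟨hm, hb, hn⟩ := treeAligned_iff.mp h
  have hroot : (0, (pforest ts).length + 1) ∈ nodePos (.node a ts :: F) := by
    rw [nodePos_node_cons]
    exact Set.mem_insert _ _
  obtain ⟨v, hv, hv₁, hv₂⟩ := (hn _ hroot).resolve_left hF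
  suffices hv0 : v.1 = 0 by
    rcases mem_nodePos_node_cons hv with rfl | hne
    exacts [⟨hv₁, hv₂⟩, absurd hv0 hne.1]
  have of_zero : ∀ i, (i, 0) ∈ M → v.1 = 0 := fun i hi => by
    rcases Nat.eq_zero_or_pos i with rfl | hi0
    · exact congrArg Prod.snd (hm.eq_of_fst_eq hv₁ hi rfl)
    · have := hm.snd_lt_snd hv₁ hi hi0
      omega
  obtain ⟨⟨i, j⟩, hq, hq'⟩ := not_forall₂.mp hG
  rcases Nat.eq_zero_or_pos j with rfl | hj0
  · exact of_zero i hq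
  -- `(i, j)` reaches the closing parenthesis of `b`; `i` is a parenthesis of a node `u` of the
  -- first forest, aligned with a node `w` that can only be `b`
  obtain ⟨u, hu, hiu⟩ := exists_mem_nodePos (hb _ hq).1
  obtain ⟨w, hw, hw₁, hw₂⟩ := (hn u hu).resolve_left fun hdel =>
    hiu.elim (hdel _ hq).1 (hdel _ hq).2
  have hjl : j = (pforest ss).length + 1 := by omega
  rcases hiu with rfl | rfl
  · cases hm.eq_of_fst_eq hq hw₁ rfl
    rcases mem_nodePos_node_cons hw with rfl | hne
    exacts [absurd hj0 (lt_irrefl 0), absurd hjl hne.2.1]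
  · cases hm.eq_of_fst_eq hq hw₂ rfl
    rcases mem_nodePos_node_cons hw with rfl | hne
    exacts [of_zero _ hw₁, absurd hjl hne.2.2]

section LowerBound

variable [DecidableEq α] (d : Bool × α)

theorem exists_treeAligned_of_untouched_left {a : α} {ts F G : List (LTree α)}
    {M : List (ℕ × ℕ)} (h : TreeAligned (.node a ts :: F) G M)
    (hu : ∀ q ∈ M, q.1 ≠ 0 ∧ q.1 ≠ (pforest ts).length + 1) :
    ∃ M', TreeAligned (ts ++ F) G M' ∧
      alignCost (pforest (.node a ts :: F)) (pforest G) d M =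
        alignCost (pforest (ts ++ F)) (pforest G) d M' + 2 := by
  obtain ⟨M', rfl⟩ : M ∈ Set.range (map (Prod.map (skipRoot (pforest ts).length) id)) := by
    rw [Set.range_list_map]
    intro q hq
    obtain ⟨j, hj⟩ := exists_skipRoot_eq (hu q hq).1 (hu q hq).2
    exact ⟨(j, q.2), by simp [hj]⟩
  have h' := treeAligned_map_skipRoot_left_iff.mp h
  exact ⟨M', h', alignCost_map_skipRoot_left_node d h'⟩

theorem exists_treeAligned_of_untouched_right {b : α} {ss F G : List (LTree α)}
    {M : List (ℕ × ℕ)} (h : TreeAligned F (.node b ss :: G) M)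
    (hu : ∀ q ∈ M, q.2 ≠ 0 ∧ q.2 ≠ (pforest ss).length + 1) :
    ∃ M', TreeAligned F (ss ++ G) M' ∧
      alignCost (pforest F) (pforest (.node b ss :: G)) d M =
        alignCost (pforest F) (pforest (ss ++ G)) d M' + 2 := by
  obtain ⟨M', rfl⟩ : M ∈ Set.range (map (Prod.map id (skipRoot (pforest ss).length))) := by
    rw [Set.range_list_map]
    intro q hq
    obtain ⟨j, hj⟩ := exists_skipRoot_eq (hu q hq).1 (hu q hq).2
    exact ⟨(q.1, j), by simp [hj]⟩
  have h' := treeAligned_map_skipRoot_right_iff.mp h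
  exact ⟨M', h', alignCost_map_skipRoot_right_node d h'⟩

theorem exists_treeAligned_of_roots_aligned {a b : α} {ts ss F G : List (LTree α)}
    {M : List (ℕ × ℕ)} (h : TreeAligned (.node a ts :: F) (.node b ss :: G) M)
    (h₀ : (0, 0) ∈ M) (hc : ((pforest ts).length + 1, (pforest ss).length + 1) ∈ M) :
    ∃ M₁ M₂, TreeAligned ts ss M₁ ∧ TreeAligned F G M₂ ∧
      alignCost (pforest (.node a ts :: F)) (pforest (.node b ss :: G)) d M =
        alignCost (pforest ts) (pforest ss) d M₁ + alignCost (pforest F) (pforest G) d M₂ +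
          if a = b then 0 else 2 := by
  obtain ⟨M₁, M₂, rfl, hb₁⟩ := h.1.eq_shiftAppend_wrap h₀ hc
  have hw : InBounds (pforest [.node a ts]) (pforest [.node b ss])
      (wrap (pforest ts).length (pforest ss).length M₁) := by
    rw [pforest_singleton_node, pforest_singleton_node]
    exact inBounds_wrap hb₁
  have hlen : ∀ (c : α) (us : List (LTree α)),
      (pforest [.node c us]).length = (pforest us).length + 2 := by simp
  have hsplit := treeAligned_shiftAppend_iff (F₂ := F) (G₂ := G) (M₂ := M₂) hw
  rw [hlen, hlen] at hsplit
  obtain ⟨hw', h₂⟩ := hsplit.mp h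
  have h₁ := (treeAligned_wrap_iff hb₁).mp hw'
  refine ⟨M₁, M₂, h₁, h₂, ?_⟩
  have hcost := alignCost_shiftAppend (d := d) hw'.1 hw h₂.1 h₂.2.1
  rw [hlen, hlen, ← pforest_append, ← pforest_append, singleton_append, singleton_append,
    alignCost_wrap_node d h₁.1 hb₁] at hcost
  rw [hcost]
  omega

theorem two_mul_ted_le_alignCost {F G : List (LTree α)} {M : List (ℕ × ℕ)}
    (h : TreeAligned F G M) : 2 * ted F G ≤ alignCost (pforest F) (pforest G) d M := by
  by_cases hG : ∃ b ss G', G = .node b ss :: G' ∧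
      ∀ q ∈ M, q.2 ≠ 0 ∧ q.2 ≠ (pforest ss).length + 1
  · obtain ⟨b, ss, G', rfl, hu⟩ := hG
    obtain ⟨M', h', hcost⟩ := exists_treeAligned_of_untouched_right d h hu
    have := two_mul_ted_le_alignCost h'
    have := ted_le_of_fstep_right (F := F) (by simpa using FStep.insert [] ss G' b)
    omega
  by_cases hF : ∃ a ts F', F = .node a ts :: F' ∧
      ∀ q ∈ M, q.1 ≠ 0 ∧ q.1 ≠ (pforest ts).length + 1
  · obtain ⟨a, ts, F', rfl, hu⟩ := hF
    obtain ⟨M', h', hcost⟩ := exists_treeAligned_of_untouched_left d h hu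
    have := two_mul_ted_le_alignCost h'
    have := ted_le_of_fstep_left (G := G) (by simpa using FStep.delete [] F' ts a)
    omega
  match F, G, hF, hG with
  | [], [], _, _ => simp [ted_nil_nil]
  | [], .node b ss :: G', _, hG =>
    exact absurd ⟨b, ss, G', rfl, fun q hq => absurd (h.2.1 q hq).1 (by simp)⟩ hG
  | .node a ts :: F', [], hF, _ =>
    exact absurd ⟨a, ts, F', rfl, fun q hq => absurd (h.2.1 q hq).2 (by simp)⟩ hF
  | .node a ts :: F', .node b ss :: G', hF, hG =>
    obtain ⟨h₀, hc⟩ := h.roots_aligned_of_touched (fun hu => hF ⟨a, ts, F', rfl, hu⟩)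
      (fun hu => hG ⟨b, ss, G', rfl, hu⟩)
    obtain ⟨M₁, M₂, h₁, h₂, hcost⟩ := exists_treeAligned_of_roots_aligned d h h₀ hc
    have := two_mul_ted_le_alignCost h₁
    have := two_mul_ted_le_alignCost h₂
    have := ted_node_cons_le a b ts ss F' G'
    split_ifs at * <;> omega
termination_by (pforest F).length + (pforest G).length
decreasing_by
  all_goals
    subst_vars
    simp only [pforest_cons, pstr_node, pforest_append, length_append, length_cons, length_nil]
    omega

end LowerBound

section UpperBound

variable [DecidableEq α] (d : Bool × α)

def TreeAlignableWithin (F G : List (LTree α)) (c : ℕ) : Prop :=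
  ∃ M, TreeAligned F G M ∧ alignCost (pforest F) (pforest G) d M ≤ c

variable {d} {F G H : List (LTree α)} {c c₁ c₂ : ℕ}

theorem TreeAlignableWithin.mono (h : TreeAlignableWithin d F G c₁) (hc : c₁ ≤ c₂) :
    TreeAlignableWithin d F G c₂ :=
  let ⟨M, hM, hcost⟩ := h
  ⟨M, hM, hcost.trans hc⟩

theorem treeAlignableWithin_refl (F : List (LTree α)) : TreeAlignableWithin d F F 0 :=
  ⟨_, treeAligned_diagonal F, (alignCost_diagonal _ d).le⟩

theorem TreeAlignableWithin.trans (h₁ : TreeAlignableWithin d F G c₁)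
    (h₂ : TreeAlignableWithin d G H c₂) : TreeAlignableWithin d F H (c₁ + c₂) := by
  obtain ⟨M₁, hM₁, hc₁⟩ := h₁
  obtain ⟨M₂, hM₂, hc₂⟩ := h₂
  exact ⟨alignComp M₁ M₂, hM₁.comp hM₂,
    (alignCost_alignComp_le hM₁.1 hM₁.2.1 hM₂.1 hM₂.2.1).trans (add_le_add hc₁ hc₂)⟩

theorem TreeAlignableWithin.append_left (pre : List (LTree α))
    (h : TreeAlignableWithin d F G c) : TreeAlignableWithin d (pre ++ F) (pre ++ G) c := by
  obtain ⟨M, hM, hcost⟩ := h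
  refine ⟨_, (treeAligned_shiftAppend_iff (inBounds_diagonal _)).mpr
    ⟨treeAligned_diagonal pre, hM⟩, ?_⟩
  rw [pforest_append, pforest_append, alignCost_shiftAppend (isMatching_diagonal _)
    (inBounds_diagonal _) hM.1 hM.2.1, alignCost_diagonal, zero_add]
  exact hcost

theorem TreeAlignableWithin.append_right (post : List (LTree α))
    (h : TreeAlignableWithin d F G c) : TreeAlignableWithin d (F ++ post) (G ++ post) c := by
  obtain ⟨M, hM, hcost⟩ := h
  refine ⟨_, (treeAligned_shiftAppend_iff hM.2.1).mpr ⟨hM, treeAligned_diagonal post⟩, ?_⟩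
  rw [pforest_append, pforest_append, alignCost_shiftAppend hM.1 hM.2.1 (isMatching_diagonal _)
    (inBounds_diagonal _), alignCost_diagonal, add_zero]
  exact hcost

theorem TreeAlignableWithin.node (a b : α) {ts ss : List (LTree α)}
    (h : TreeAlignableWithin d ts ss c) :
    TreeAlignableWithin d [.node a ts] [.node b ss] (c + if a = b then 0 else 2) := by
  obtain ⟨M, hM, hcost⟩ := h
  refine ⟨_, (treeAligned_wrap_iff hM.2.1).mpr hM, ?_⟩
  rw [alignCost_wrap_node d hM.1 hM.2.1]
  omega

theorem treeAlignableWithin_delete (a : α) (ts F : List (LTree α)) :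
    TreeAlignableWithin d (.node a ts :: F) (ts ++ F) 2 := by
  have h := treeAligned_diagonal (ts ++ F)
  refine ⟨_, treeAligned_map_skipRoot_left_iff.mpr h, ?_⟩
  rw [alignCost_map_skipRoot_left_node d h, alignCost_diagonal]

theorem treeAlignableWithin_insert (a : α) (ts F : List (LTree α)) :
    TreeAlignableWithin d (ts ++ F) (.node a ts :: F) 2 := by
  have h := treeAligned_diagonal (ts ++ F)
  refine ⟨_, treeAligned_map_skipRoot_right_iff.mpr h, ?_⟩
  rw [alignCost_map_skipRoot_right_node d h, alignCost_diagonal]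

theorem FStep.treeAlignableWithin (h : FStep F G) : TreeAlignableWithin d F G 2 := by
  induction h with
  | relabel pre post ts a b =>
    exact ((((treeAlignableWithin_refl ts).node a b).mono (by split_ifs <;> omega)).append_right
      post).append_left pre
  | delete pre post ts a =>
    simpa using (treeAlignableWithin_delete a ts post).append_left pre
  | insert pre mid post a =>
    simpa using (treeAlignableWithin_insert a mid post).append_left pre
  | congr pre post ts ts' a _ ih =>
    exact ((ih.node a a).mono (by simp)).append_right post |>.append_left pre

theorem FEdits.treeAlignableWithin {n : ℕ} (h : FEdits n F G) :
    TreeAlignableWithin d F G (2 * n) := by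
  induction h with
  | refl F => exact treeAlignableWithin_refl F
  | step s _ ih => exact (s.treeAlignableWithin.trans ih).mono (by omega)

end UpperBound

end EditDistance

/-- `2·ted(F,G)` equals the minimum cost of a tree alignment of `str(F)` and
`str(G)`. -/
theorem stmt10 {α : Type} [DecidableEq α] (d : Bool × α) (F G : List (LTree α)) :
    2 * ted F G =
      sInf {c | ∃ M, TreeAligned F G M ∧ c = alignCost (pforest F) (pforest G) d M} := by
  obtain ⟨M, hM, hcost⟩ := (fedits_ted F G).treeAlignableWithin (d := d)
  have hmem : alignCost (pforest F) (pforest G) d M ∈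
      {c | ∃ M, TreeAligned F G M ∧ c = alignCost (pforest F) (pforest G) d M} := ⟨M, hM, rfl⟩
  refine le_antisymm (le_csInf ⟨_, hmem⟩ ?_) ((Nat.sInf_le hmem).trans hcost)
  rintro _ ⟨M', hM', rfl⟩
  exact two_mul_ted_le_alignCost d hM'
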